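/- Let (e_n) denote the canonical basis of ℓ∞ viewed as coordinate functionals on ℓ₁ (so e_n(x) = x_n for x ∈ ℓ₁). If (a_n) is a sequence of positive reals with ∑_{n=1}^∞ a_n^{-1} = ∞, then 0 is a σ(ℓ∞, ℓ₁)-cluster point of the sequence (a_n e_n) in ℓ∞. -/

import Mathlib

open Filter Finset

/- Otherwise, for all large `m` some `x ∈ s` has `|aₘ xₘ| ≥ ε`, so `aₘ⁻¹ ≤ ε⁻¹ ∑_{x ∈ s} |xₘ|`;
the right-hand side is summable because `s ⊆ ℓ₁`, which would force `∑ aₙ⁻¹ < ∞`. -/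

theorem frequently_mul_lt_of_not_summable_inv {a g : ℕ → ℝ} (ha : ∀ n, 0 < a n)
    (hdiv : ¬ Summable fun n => (a n)⁻¹) (hg : Summable g) {ε : ℝ} (hε : 0 < ε) :
    ∃ᶠ m in atTop, a m * g m < ε := by
  intro hge
  refine hdiv <| (hg.mul_left ε⁻¹).of_norm_bounded_eventually_nat ?_
  filter_upwards [hge] with m hm
  rw [not_lt, ← div_le_iff₀' (ha m)] at hm
  calc ‖(a m)⁻¹‖ = ε⁻¹ * (ε / a m) := by
        rw [Real.norm_of_nonneg (inv_nonneg.2 (ha m).le)]; field_simp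
    _ ≤ ε⁻¹ * g m := by gcongr

theorem lp.summable_abs_of_one {ι : Type*} (x : lp (fun _ : ι => ℝ) 1) :
    Summable fun n => |x n| := by
  simpa using (lp.memℓp x).summable (by simp)

/-- If `∑ aₙ⁻¹ = ∞` then `0` is a `σ(ℓ∞, ℓ₁)`-cluster point of `(aₙ eₙ)`,
where `eₙ` are the coordinate functionals on `ℓ₁`. -/
theorem stmt_3 (a : ℕ → ℝ) (ha : ∀ n, 0 < a n)
    (hdiv : ¬ Summable (fun n => (a n)⁻¹)) :
    ∀ (s : Finset (lp (fun _ : ℕ => ℝ) 1)) (ε : ℝ), 0 < ε → ∀ N : ℕ,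
      ∃ m ≥ N, ∀ x ∈ s, |a m * x m| < ε := by
  intro s ε hε N
  have hsum : Summable fun m => ∑ x ∈ s, |x m| :=
    summable_sum fun x _ => lp.summable_abs_of_one x
  obtain ⟨m, hmN, hm⟩ :=
    frequently_atTop.1 (frequently_mul_lt_of_not_summable_inv ha hdiv hsum hε) N
  refine ⟨m, hmN, fun x hx => ?_⟩
  calc |a m * x m| = a m * |x m| := by rw [abs_mul, abs_of_pos (ha m)]
    _ ≤ a m * ∑ y ∈ s, |y m| :=
      mul_le_mul_of_nonneg_left (single_le_sum (fun y _ => abs_nonneg (y m)) hx) (ha m).le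
    _ < ε := hm
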